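/- Intertwining relation: for x, x' ∈ W^{n+1} (strictly increasing integer vectors of length n+1) and y' interlacing with x', Σ_{y ∈ W^n(x)} λ^n(x,y) q_t^{n,+}((x,y),(x',y')) = p_t^{n+1,+}(x,x') λ^n(x',y'), where λ^n(x,y) = n! h_n(y)/h_{n+1}(x), q_t^{n,+} = (h_n(y')/h_n(y)) q_t^n is the h-transformed determinantal kernel, and p_t^{n+1,+}(x,x') = (h_{n+1}(x')/h_{n+1}(x)) det[φ^{(t)}(x'_j − x_i)]_{1≤i,j≤n+1}. -/

import Mathlib

open Matrix BigOperators

/-- Kronecker delta `δ_i : ℤ → ℝ`. -/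
noncomputable def deltaK (i : ℤ) : ℤ → ℝ := fun x => if x = i then 1 else 0

/-- Convolution `(f * g)(x) = Σ_{s+t=x} f(s) g(t)`. -/
noncomputable def conv (f g : ℤ → ℝ) : ℤ → ℝ := fun x => ∑' s : ℤ, f s * g (x - s)

/-- The Bernoulli(1/2) step distribution `φ = (δ_0 + δ_1)/2`. -/
noncomputable def phiB : ℤ → ℝ := fun x => (deltaK 0 x + deltaK 1 x) / 2

/-- `t`-fold convolution power of `φ`. -/
noncomputable def phiPow : ℕ → ℤ → ℝ
  | 0 => deltaK 0
  | (n+1) => conv (phiPow n) phiB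

/-- `Δ⁻¹ f (x) = Σ_{z ≤ x} f(z)`. -/
noncomputable def Dinv (f : ℤ → ℝ) (x : ℤ) : ℝ := ∑' z : {z : ℤ // z ≤ x}, f z.1

/-- Backward difference `Δ f (x) = f(x) - f(x-1)`. -/
noncomputable def Dd (f : ℤ → ℝ) (x : ℤ) : ℝ := f x - f (x - 1)

/-- Vandermonde product `h_n(z) = Π_{i<j} (z_j - z_i)` (real valued). -/
noncomputable def vand (n : ℕ) (z : Fin n → ℤ) : ℝ :=
  ∏ i : Fin n, ∏ j ∈ Finset.Ioi i, ((z j - z i : ℤ) : ℝ)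

/-- The interlacing cone `W^{n+1,n}`: `x_1 ≤ y_1 < x_2 ≤ … ≤ y_n < x_{n+1}`. -/
def interlace (n : ℕ) (x : Fin (n+1) → ℤ) (y : Fin n → ℤ) : Prop :=
  ∀ i : Fin n, x i.castSucc ≤ y i ∧ y i < x i.succ

/-- The determinantal kernel `q_t^n((x,y),(x',y'))` (rows indexed by the starting
point `(x,y)`, columns by the end point `(x',y')`). -/
noncomputable def qker (n t : ℕ) (x : Fin (n+1) → ℤ) (y : Fin n → ℤ)
    (x' : Fin (n+1) → ℤ) (y' : Fin n → ℤ) : ℝ :=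
  (Matrix.fromBlocks
    (Matrix.of fun i j : Fin (n+1) => phiPow t (x' j - x i))
    (Matrix.of fun (i : Fin (n+1)) (j : Fin n) =>
      Dinv (phiPow t) (y' j - x i) - if (i : ℕ) ≤ (j : ℕ) then 1 else 0)
    (Matrix.of fun (i : Fin n) (j : Fin (n+1)) => Dd (phiPow t) (x' j - y i))
    (Matrix.of fun i j : Fin n => phiPow t (y' j - y i))).det

/-- `λ^n(x,y) = n! h_n(y)/h_{n+1}(x)`. -/
noncomputable def lam (n : ℕ) (x : Fin (n+1) → ℤ) (y : Fin n → ℤ) : ℝ :=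
  (n.factorial : ℝ) * vand n y / vand (n+1) x

/-- `p_t^{n,+}(y,y') = (h_n(y')/h_n(y)) det[φ^{(t)}(y'_j - y_i)]`. -/
noncomputable def pplus (n t : ℕ) (y y' : Fin n → ℤ) : ℝ :=
  (vand n y' / vand n y) * (Matrix.of fun i j : Fin n => phiPow t (y' j - y i)).det

/-! Since `λ^n(x,y) h_n(y')/h_n(y) = n! h_n(y')/h_{n+1}(x)` does not depend on `y`, the relation
reduces to `Σ_y q_t^n((x,y),(x',y')) = det[φ^{(t)}(x'_j - x_i)]`. The lower rows of `q_t^n` depend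
on `y` only through `y_i ∈ [x_i, x_{i+1})`, so by multilinearity the sum over `y` can be taken row
by row. The row sums telescope: row `i` of the lower blocks becomes the difference of rows `i` and
`i+1` of the upper blocks, plus the identity in the lower right block (this is what the indicator
`1{j ≥ i}` is for), and a block row reduction leaves `det[φ^{(t)}(x'_j - x_i)]`. -/

lemma conv_phiB_apply (f : ℤ → ℝ) (x : ℤ) : conv f phiB x = (f x + f (x - 1)) / 2 := by
  have hsupp : ∀ s ∉ ({x - 1, x} : Finset ℤ), f s * phiB (x - s) = 0 := by
    intro s hs
    simp only [Finset.mem_insert, Finset.mem_singleton, not_or] at hs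
    simp [phiB, deltaK, sub_eq_zero, Ne.symm hs.2, show x - s ≠ 1 by omega]
  rw [conv, tsum_eq_sum hsupp, Finset.sum_pair (by omega)]
  simp [phiB, deltaK]
  ring

lemma phiPow_eq_zero_of_notMem {t : ℕ} {z : ℤ} (hz : z ∉ Finset.Icc (0 : ℤ) t) :
    phiPow t z = 0 := by
  induction t generalizing z with
  | zero => simp_all [phiPow, deltaK]
  | succ t ih =>
    rw [Finset.mem_Icc, not_and_or] at hz
    rw [phiPow, conv_phiB_apply, ih (by simp; omega), ih (by simp; omega)]
    simp

lemma summable_phiPow (t : ℕ) : Summable (phiPow t) :=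
  summable_of_ne_finset_zero fun _ => phiPow_eq_zero_of_notMem

lemma Dd_Dinv {f : ℤ → ℝ} (hf : Summable f) (x : ℤ) : Dd (Dinv f) x = f x := by
  have hIic : Set.Iic x = {x} ∪ Set.Iic (x - 1) := by
    ext z; simp only [Set.mem_Iic, Set.mem_union, Set.mem_singleton_iff]; omega
  have hsplit : Dinv f x = f x + Dinv f (x - 1) := by
    change ∑' z : Set.Iic x, f z = _
    rw [hIic, hf.subtype _ |>.tsum_union_disjoint (by simp) (hf.subtype _), tsum_singleton]
    rfl
  rw [Dd, hsplit, add_sub_cancel_right]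

lemma sum_Ico_Dd (f : ℤ → ℝ) (c : ℤ) {a b : ℤ} (hab : a ≤ b) :
    ∑ z ∈ Finset.Ico a b, Dd f (c - z) = f (c - a) - f (c - b) := by
  induction b, hab using Int.leInduction with
  | base => simp
  | succ b hab ih =>
    rw [← Finset.insert_Ico_right_eq_Ico_add_one hab, Finset.sum_insert (by simp), ih, Dd, sub_sub]
    ring

lemma sum_Ico_phiPow (t : ℕ) (c : ℤ) {a b : ℤ} (hab : a ≤ b) :
    ∑ z ∈ Finset.Ico a b, phiPow t (c - z) = Dinv (phiPow t) (c - a) - Dinv (phiPow t) (c - b) := by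
  simp_rw [← Dd_Dinv (summable_phiPow t)]
  exact sum_Ico_Dd _ c hab

namespace Matrix

variable {R α m k : Type*} [CommRing R] [Fintype m] [Fintype k] [DecidableEq m] [DecidableEq k]

lemma det_fromBlocks_mul_mul_add_one (A : Matrix m m R) (B : Matrix m k R) (E : Matrix k m R) :
    (fromBlocks A B (E * A) (E * B + 1)).det = A.det := by
  have hfactor : fromBlocks A B (E * A) (E * B + 1) = fromBlocks 1 0 E 1 * fromBlocks A B 0 1 := by
    simp [fromBlocks_multiply]
  rw [hfactor, det_mul, det_fromBlocks_zero₁₂, det_fromBlocks_zero₂₁]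
  simp

lemma sum_det_fromBlocks_lower (s : k → Finset α) (A : Matrix m m R) (B : Matrix m k R)
    (C : k → α → m → R) (D : k → α → k → R) :
    ∑ y ∈ Fintype.piFinset s, (fromBlocks A B (of fun i => C i (y i)) (of fun i => D i (y i))).det
      = (fromBlocks A B (of fun i => ∑ a ∈ s i, C i a) (of fun i => ∑ a ∈ s i, D i a)).det := by
  have hexpand := (detRowAlternating.toMultilinearMap.currySum fun i => Sum.elim (A i) (B i)).map_sum_finset
    (fun i a => Sum.elim (C i a) (D i a)) s
  simp only [MultilinearMap.currySum_apply', AlternatingMap.coe_multilinearMap] at hexpand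
  convert hexpand.symm using 3 with y
  · rfl
  · congr 1
    ext (i | i) (j | j) <;> simp [Finset.sum_apply]

end Matrix

def finDiff (R : Type*) [Ring R] (n : ℕ) : Matrix (Fin n) (Fin (n + 1)) R :=
  Matrix.of fun i => Pi.single i.castSucc 1 - Pi.single i.succ 1

lemma finDiff_mul_apply {R : Type*} [Ring R] {n : ℕ} {k : Type*} (M : Matrix (Fin (n + 1)) k R)
    (i : Fin n) (j : k) : (finDiff R n * M) i j = M i.castSucc j - M i.succ j := by
  simp [finDiff, Matrix.mul_apply, sub_mul, Finset.sum_sub_distrib, Pi.single_apply]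

section Kernel

variable {n : ℕ} {x : Fin (n + 1) → ℤ}

lemma interlace_iff_mem_piFinset {y : Fin n → ℤ} :
    interlace n x y ↔ y ∈ Fintype.piFinset fun i => Finset.Ico (x i.castSucc) (x i.succ) := by
  simp [interlace, Fintype.mem_piFinset]

lemma tsum_interlace_eq_sum (g : (Fin n → ℤ) → ℝ) :
    ∑' y : {y // interlace n x y}, g y
      = ∑ y ∈ Fintype.piFinset fun i => Finset.Ico (x i.castSucc) (x i.succ), g y := by
  rw [← Finset.tsum_subtype]
  exact (Equiv.subtypeEquivRight fun _ => interlace_iff_mem_piFinset).tsum_eq fun y => g y.1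

lemma tsum_interlace_qker (t : ℕ) (hx : Monotone x) (x' : Fin (n + 1) → ℤ) (y' : Fin n → ℤ) :
    ∑' y : {y // interlace n x y}, qker n t x y x' y'
      = (Matrix.of fun i j : Fin (n + 1) => phiPow t (x' j - x i)).det := by
  set A : Matrix (Fin (n + 1)) (Fin (n + 1)) ℝ := .of fun i j => phiPow t (x' j - x i)
  set B : Matrix (Fin (n + 1)) (Fin n) ℝ :=
    .of fun i j => Dinv (phiPow t) (y' j - x i) - if (i : ℕ) ≤ j then 1 else 0
  have hstep (i : Fin n) : x i.castSucc ≤ x i.succ := hx (Fin.castSucc_le_succ i)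
  have hC : (Matrix.of fun i => ∑ a ∈ Finset.Ico (x i.castSucc) (x i.succ),
      fun j => Dd (phiPow t) (x' j - a)) = finDiff ℝ n * A := by
    ext i j
    rw [finDiff_mul_apply, Matrix.of_apply, Finset.sum_apply]
    exact sum_Ico_Dd _ _ (hstep i)
  have hD : (Matrix.of fun i => ∑ a ∈ Finset.Ico (x i.castSucc) (x i.succ),
      fun j => phiPow t (y' j - a)) = finDiff ℝ n * B + 1 := by
    ext i j
    rw [Matrix.add_apply, finDiff_mul_apply, Matrix.of_apply, Finset.sum_apply,
      sum_Ico_phiPow t _ (hstep i)]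
    simp only [B, Matrix.of_apply, Matrix.one_apply, Fin.ext_iff, Fin.val_castSucc, Fin.val_succ]
    split_ifs <;> first | omega | ring
  rw [tsum_interlace_eq_sum fun y => qker n t x y x' y']
  refine (Matrix.sum_det_fromBlocks_lower _ A B (fun _ a j => Dd (phiPow t) (x' j - a))
    fun _ a j => phiPow t (y' j - a)).trans ?_
  rw [hC, hD, Matrix.det_fromBlocks_mul_mul_add_one]

end Kernel

lemma vand_pos {m : ℕ} {z : Fin m → ℤ} (hz : StrictMono z) : 0 < vand m z :=
  Finset.prod_pos fun _ _ => Finset.prod_pos fun _ hj =>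
    Int.cast_pos.2 (sub_pos.2 (hz (Finset.mem_Ioi.1 hj)))

namespace interlace

variable {n : ℕ} {x : Fin (n + 1) → ℤ} {y : Fin n → ℤ}

lemma strictMono_upper (h : interlace n x y) : StrictMono x :=
  Fin.strictMono_iff_lt_succ.2 fun i => (h i).1.trans_lt (h i).2

lemma strictMono_lower (h : interlace n x y) (hx : Monotone x) : StrictMono y :=
  fun i j hij => calc
    y i < x i.succ := (h i).2
    _ ≤ x j.castSucc := hx (Fin.succ_le_castSucc_iff.2 hij)
    _ ≤ y j := (h j).1

end interlace

lemma lam_mul_div_vand {n : ℕ} (x : Fin (n + 1) → ℤ) {y : Fin n → ℤ} (hy : vand n y ≠ 0) (c : ℝ) :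
    lam n x y * (c / vand n y) = n.factorial * c / vand (n + 1) x := by
  rw [lam]
  field_simp

/-- the intertwining relation
`Σ_y λ^n(x,y) q_t^{n,+}((x,y),(x',y')) = p_t^{n+1,+}(x,x') λ^n(x',y')`. -/
theorem intertwining (n t : ℕ) (x x' : Fin (n+1) → ℤ) (y' : Fin n → ℤ)
    (hx : StrictMono x) (hx' : interlace n x' y') :
    ∑' y : {y : Fin n → ℤ // interlace n x y},
        lam n x y.1 * ((vand n y' / vand n y.1) * qker n t x y.1 x' y')
      = pplus (n+1) t x x' * lam n x' y' := by
  have hterm (y : {y : Fin n → ℤ // interlace n x y}) :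
      lam n x y.1 * ((vand n y' / vand n y.1) * qker n t x y.1 x' y')
        = n.factorial * vand n y' / vand (n + 1) x * qker n t x y.1 x' y' := by
    rw [← mul_assoc, lam_mul_div_vand x (vand_pos (y.2.strictMono_lower hx.monotone)).ne']
  have hvx' : vand (n + 1) x' ≠ 0 := (vand_pos hx'.strictMono_upper).ne'
  rw [tsum_congr hterm, tsum_mul_left, tsum_interlace_qker t hx.monotone, pplus, lam]
  field_simp
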